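/- The map φ taking a metric d on a finite set A to the Σ-proximity φ(d)(x,y) = d(x,·) + d(y,·) − d(x,y) − d(·,·) + Σ/n is a bijection between the set of metrics on A and the set of Σ-proximities on A, with inverse ψ(σ)(x,y) = (σ(x,x)+σ(y,y))/2 − σ(x,y). -/

import Mathlib

open Finset

/-- A metric in the sense of the paper: `d x y = 0` iff `x = y`, and
the triangle inequality `d x y + d x z - d y z ≥ 0`. -/
def IsPaperMetric {A : Type*} (d : A → A → ℝ) : Prop :=
  (∀ x y, d x y = 0 ↔ x = y) ∧ (∀ x y z, 0 ≤ d x y + d x z - d y z)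

/-- A Σ-proximity on a finite set: normalization and the (σ-)triangle
inequality, strict when `z = y` and `x ≠ y`. -/
def IsSigmaProx {A : Type*} [Fintype A] (S : ℝ) (σ : A → A → ℝ) : Prop :=
  (∀ x, ∑ t, σ x t = S) ∧
  (∀ x y z, σ x y + σ x z - σ y z ≤ σ x x) ∧
  (∀ x y, x ≠ y → σ x y + σ x y - σ y y < σ x x)

/-- `d(x,·)`: the average distance from `x`. -/
noncomputable def dRow {A : Type*} [Fintype A] (d : A → A → ℝ) (x : A) : ℝ :=
  (∑ t, d x t) / (Fintype.card A : ℝ)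

/-- `d(·,·)`: the overall average distance. -/
noncomputable def dAvg {A : Type*} [Fintype A] (d : A → A → ℝ) : ℝ :=
  (∑ s, ∑ t, d s t) / (Fintype.card A : ℝ) ^ 2

/-- The transformation φ from metrics to Σ-proximities. -/
noncomputable def phi {A : Type*} [Fintype A] (S : ℝ) (d : A → A → ℝ) : A → A → ℝ :=
  fun x y => dRow d x + dRow d y - d x y - dAvg d + S / (Fintype.card A : ℝ)

/-- The transformation ψ from Σ-proximities to metrics. -/
noncomputable def psi {A : Type*} (σ : A → A → ℝ) : A → A → ℝ :=
  fun x y => (σ x x + σ y y) / 2 - σ x y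

/-!
φ(d)(x,y) differs from `-d x y` only by terms depending on `x` alone or on `y` alone, and such
terms cancel in both `σ x y + σ x z - σ y z - σ x x` and `(σ x x + σ y y) / 2 - σ x y`. Hence the
triangle inequalities of `d` and of `φ(d)` are the same inequality, and `ψ ∘ φ` is the identity
on functions vanishing on the diagonal. Conversely, the row-sum normalization `∑ t, σ x t = Σ`
determines the row and total averages of `ψ(σ)`, which makes `φ ∘ ψ` the identity on
Σ-proximities.
-/

section Metric

variable {A : Type*} {d : A → A → ℝ}

theorem IsPaperMetric.self (hd : IsPaperMetric d) (x : A) : d x x = 0 :=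
  (hd.1 x x).2 rfl

theorem IsPaperMetric.pos_of_ne (hd : IsPaperMetric d) {x y : A} (hxy : x ≠ y) : 0 < d x y := by
  have hnonneg : 0 ≤ d x y := by linarith [hd.2 x y y, hd.self y]
  exact hnonneg.lt_of_ne fun h => hxy ((hd.1 x y).1 h.symm)

end Metric

section Phi

variable {A : Type*} [Fintype A] (S : ℝ) (d : A → A → ℝ)

theorem phi_add_phi_sub_phi_sub_phi (x y z : A) :
    phi S d x y + phi S d x z - phi S d y z - phi S d x x = d y z + d x x - d x y - d x z := by
  simp only [phi]
  ring

theorem sum_phi [Nonempty A] (x : A) : ∑ t, phi S d x t = S := by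
  have hrow : ∑ t, d x t = Fintype.card A * dRow d x := by
    rw [dRow]
    field_simp
  have hrows : ∑ t, dRow d t = Fintype.card A * dAvg d := by
    simp only [dRow, dAvg, ← sum_div]
    field_simp
  simp only [phi, sum_add_distrib, sum_sub_distrib, sum_const, card_univ, nsmul_eq_mul, hrow,
    hrows]
  field_simp
  ring

theorem psi_phi (hd : ∀ x, d x x = 0) : psi (phi S d) = d := by
  funext x y
  simp only [psi, phi, hd]
  ring

theorem IsPaperMetric.isSigmaProx_phi [Nonempty A] (hd : IsPaperMetric d) :
    IsSigmaProx S (phi S d) := by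
  refine ⟨sum_phi S d, fun x y z => ?_, fun x y hxy => ?_⟩
  · linarith [phi_add_phi_sub_phi_sub_phi S d x y z, hd.2 x y z, hd.self x]
  · linarith [phi_add_phi_sub_phi_sub_phi S d x y y, hd.pos_of_ne hxy, hd.self x, hd.self y]

end Phi

section Psi

variable {A : Type*} {S : ℝ} {σ : A → A → ℝ}

theorem psi_self (x : A) : psi σ x x = 0 := by
  simp [psi]

theorem psi_add_psi_sub_psi (x y z : A) :
    psi σ x y + psi σ x z - psi σ y z = σ x x + σ y z - σ x y - σ x z := by
  simp only [psi]
  ring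

theorem IsSigmaProx.isPaperMetric_psi [Fintype A] (hσ : IsSigmaProx S σ) :
    IsPaperMetric (psi σ) := by
  refine ⟨fun x y => ⟨fun h => ?_, fun hxy => hxy ▸ psi_self x⟩, fun x y z => ?_⟩
  · by_contra hxy
    linarith [hσ.2.2 x y hxy, psi_add_psi_sub_psi (σ := σ) x y y, psi_self (σ := σ) y]
  · linarith [hσ.2.1 x y z, psi_add_psi_sub_psi (σ := σ) x y z]

variable [Fintype A]

theorem sum_psi (hrow : ∀ x, ∑ t, σ x t = S) (x : A) :
    ∑ t, psi σ x t = (Fintype.card A * σ x x + ∑ t, σ t t) / 2 - S := by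
  simp only [psi]
  rw [sum_sub_distrib, hrow x, ← sum_div, sum_add_distrib, sum_const, card_univ, nsmul_eq_mul]

theorem dRow_psi (hrow : ∀ x, ∑ t, σ x t = S) (x : A) :
    dRow (psi σ) x = ((Fintype.card A * σ x x + ∑ t, σ t t) / 2 - S) / Fintype.card A := by
  rw [dRow, sum_psi hrow]

theorem dAvg_psi [Nonempty A] (hrow : ∀ x, ∑ t, σ x t = S) :
    dAvg (psi σ) = (∑ t, σ t t - S) / Fintype.card A := by
  simp only [dAvg, sum_psi hrow, sum_sub_distrib, ← sum_div, sum_add_distrib, ← mul_sum,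
    sum_const, card_univ, nsmul_eq_mul]
  field_simp
  ring

theorem phi_psi [Nonempty A] (hrow : ∀ x, ∑ t, σ x t = S) : phi S (psi σ) = σ := by
  funext x y
  simp only [phi, dRow_psi hrow, dAvg_psi hrow, psi]
  field_simp
  ring

end Psi

theorem phi_bijOn {A : Type*} [Fintype A] [Nonempty A] (S : ℝ) :
    Set.BijOn (phi S) {d : A → A → ℝ | IsPaperMetric d}
      {σ : A → A → ℝ | IsSigmaProx S σ} ∧
    Set.InvOn psi (phi S) {d : A → A → ℝ | IsPaperMetric d}
      {σ : A → A → ℝ | IsSigmaProx S σ} := by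
  have hleft : Set.LeftInvOn psi (phi S) {d : A → A → ℝ | IsPaperMetric d} :=
    fun d hd => psi_phi S d hd.self
  have hright : Set.RightInvOn psi (phi S) {σ : A → A → ℝ | IsSigmaProx S σ} :=
    fun σ hσ => phi_psi hσ.1
  exact ⟨⟨fun d hd => hd.isSigmaProx_phi S, hleft.injOn,
    fun σ hσ => ⟨psi σ, hσ.isPaperMetric_psi, hright hσ⟩⟩, hleft, hright⟩
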